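/- A nontrivial finite perfect group all of whose Sylow subgroups are cyclic is trivial; i.e., every finite group with all Sylow subgroups cyclic is solvable. -/

import Mathlib

theorem cyclic_sylow_solvable (H : Type*) [Group H] [Finite H]
    (h : ∀ (p : ℕ) (_ : Fact p.Prime) (P : Sylow p H), IsCyclic P) :
    IsSolvable H ∧ (commutator H = ⊤ → Subsingleton H) := by
  have : IsZGroup H := ⟨fun p hp ↦ h p ⟨hp⟩⟩
  refine ⟨(inferInstance : Group.IsSolvable H), fun hperfect ↦ ?_⟩
  by_contra hnontrivial
  rw [not_subsingleton_iff_nontrivial] at hnontrivial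
  exact (IsZGroup.commutator_lt H).ne hperfect
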